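/- arXiv:2301.03434 — 2 statements merged into one kernel-verified Lean document; each statement's English description precedes it below -/
import Mathlib

section
/- The plethystic logarithm is a left inverse of the plethystic exponential: Log[Exp[G]] = G for all G in the augmentation ideal. -/
/-!
Expanding `ψ_n` over the series `S = ∑_m m⁻¹ ψ_m G` with `ψ_n ∘ ψ_m = ψ_{nm}`, the left-hand side
becomes the double series `∑_{n,m} μ(n)/(nm) ψ_{nm} G`. Grouping its terms by `k = nm`, the
coefficient of `ψ_k G` is `(∑_{d ∣ k} μ(d))/k`, which vanishes unless `k = 1`.
-/

open ArithmeticFunction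
open scoped ArithmeticFunction.Moebius

theorem ArithmeticFunction.sum_divisorsAntidiagonal_moebius {R : Type*} [Ring R] (n : ℕ) :
    ∑ x ∈ n.divisorsAntidiagonal, (μ x.1 : R) = if n = 1 then 1 else 0 := by
  have h : ∑ d ∈ n.divisors, μ d = if n = 1 then 1 else 0 := by
    rw [← coe_mul_zeta_apply, moebius_mul_coe_zeta, one_apply]
  rw [Nat.sum_divisorsAntidiagonal fun a _ => (μ a : R), ← Int.cast_sum, h]
  split_ifs <;> simp

def PNat.mulFiberEquiv (k : ℕ+) :
    {p : ℕ+ × ℕ+ // p.1 * p.2 = k} ≃ (k : ℕ).divisorsAntidiagonal where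
  toFun p := ⟨(p.1.1, p.1.2), Nat.mem_divisorsAntidiagonal.mpr
    ⟨by rw [← PNat.mul_coe, p.2], k.ne_zero⟩⟩
  invFun x :=
    have hx := Nat.mem_divisorsAntidiagonal.mp x.2
    ⟨(⟨x.1.1, Nat.pos_of_ne_zero (left_ne_zero_of_mul (hx.1 ▸ hx.2))⟩,
      ⟨x.1.2, Nat.pos_of_ne_zero (right_ne_zero_of_mul (hx.1 ▸ hx.2))⟩), PNat.eq hx.1⟩
  left_inv _ := rfl
  right_inv _ := rfl

theorem HasSum.sum_divisorsAntidiagonal_pnat {M : Type*} [AddCommMonoid M] [TopologicalSpace M]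
    [ContinuousAdd M] [RegularSpace M] {f : ℕ → ℕ → M} {a : M}
    (hf : HasSum (fun p : ℕ+ × ℕ+ => f p.1 p.2) a) :
    HasSum (fun k : ℕ+ => ∑ x ∈ (k : ℕ).divisorsAntidiagonal, f x.1 x.2) a := by
  refine ((Equiv.sigmaFiberEquiv fun p : ℕ+ × ℕ+ => p.1 * p.2).hasSum_iff.mpr hf).sigma
    fun k => ?_
  rw [← Finset.sum_coe_sort]
  exact (PNat.mulFiberEquiv k).symm.hasSum_iff.mp (hasSum_fintype _)

theorem ArithmeticFunction.eq_of_hasSum_moebius_div_mul_smul {K M : Type*} [DivisionRing K]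
    [AddCommGroup M] [Module K M] [TopologicalSpace M] [ContinuousAdd M] [T3Space M]
    {u : ℕ → M} {a : M}
    (h : HasSum (fun p : ℕ+ × ℕ+ => ((μ p.1 : K) / (p.1 * p.2)) • u (p.1 * p.2)) a) :
    a = u 1 := by
  have hfiber (k : ℕ) :
      ∑ x ∈ k.divisorsAntidiagonal, ((μ x.1 : K) / (x.1 * x.2)) • u (x.1 * x.2)
        = if k = 1 then u 1 else 0 := by
    have hterm (x : ℕ × ℕ) (hx : x ∈ k.divisorsAntidiagonal) :
        ((μ x.1 : K) / (x.1 * x.2)) • u (x.1 * x.2) = ((μ x.1 : K) / k) • u k := by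
      rw [← Nat.cast_mul, (Nat.mem_divisorsAntidiagonal.mp hx).1]
    rw [Finset.sum_congr rfl hterm, ← Finset.sum_smul, ← Finset.sum_div,
      sum_divisorsAntidiagonal_moebius]
    split_ifs with hk <;> simp [hk]
  have hgrouped := h.sum_divisorsAntidiagonal_pnat
    (f := fun n m => ((μ n : K) / (n * m)) • u (n * m))
  simp only [hfiber, PNat.coe_eq_one_iff] at hgrouped
  exact hgrouped.unique (hasSum_ite_eq 1 (u 1))

theorem stmt_6_general {A : Type*} [CommRing A] [Algebra ℚ A] [TopologicalSpace A]
    [IsTopologicalRing A] [T2Space A]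
    (ψ : ℕ+ → A →ₐ[ℚ] A)
    (hψ1 : ψ 1 = AlgHom.id ℚ A)
    (hψmul : ∀ m n : ℕ+, ψ (m * n) = (ψ m).comp (ψ n))
    (hψcont : ∀ n : ℕ+, Continuous (ψ n))
    (expA logA : A → A)
    (I : Ideal A)
    (hlogexp : ∀ a ∈ I, logA (expA a) = a)
    (G : A)
    (hSG : Summable fun m : ℕ+ => ((m : ℚ)⁻¹) • ψ m G)
    (hSGI : (∑' m : ℕ+, ((m : ℚ)⁻¹) • ψ m G) ∈ I)
    (hsum2 : Summable fun p : ℕ+ × ℕ+ =>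
      ((((ArithmeticFunction.moebius p.1 : ℤ) : ℚ)) / ((p.1 : ℚ) * (p.2 : ℚ)))
        • ψ (p.1 * p.2) G) :
    (∑' n : ℕ+, (((ArithmeticFunction.moebius n : ℤ) : ℚ) / n)
        • ψ n (logA (expA (∑' m : ℕ+, ((m : ℚ)⁻¹) • ψ m G)))) = G := by
  rw [hlogexp _ hSGI]
  have hrow (n : ℕ+) : HasSum (fun m : ℕ+ => ((μ n : ℚ) / (n * m)) • ψ (n * m) G)
      (((μ n : ℚ) / n) • ψ n (∑' m : ℕ+, ((m : ℚ)⁻¹) • ψ m G)) := by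
    convert (hSG.hasSum.map (ψ n) (hψcont n)).const_smul ((μ n : ℚ) / n) using 2 with m
    simp only [Function.comp_apply, map_smul, hψmul, AlgHom.comp_apply, smul_smul]
    congr 1
    ring
  rw [(hsum2.hasSum.prod_fiberwise hrow).tsum_eq]
  have hψG : HasSum
      (fun p : ℕ+ × ℕ+ => ((μ p.1 : ℚ) / (p.1 * p.2)) • ψ (p.1 * p.2 : ℕ).toPNat' G)
      (∑' p : ℕ+ × ℕ+, ((μ p.1 : ℚ) / (p.1 * p.2)) • ψ (p.1 * p.2) G) := by
    simpa only [← PNat.mul_coe, PNat.coe_toPNat'] using hsum2.hasSum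
  rw [eq_of_hasSum_moebius_div_mul_smul (u := fun k => ψ k.toPNat' G) hψG]
  exact congrArg (· G) hψ1

theorem stmt_6 {A : Type*} [CommRing A] [Algebra ℚ A] [TopologicalSpace A]
    [IsTopologicalRing A] [T2Space A]
    (ψ : ℕ+ → A →ₐ[ℚ] A)
    (hψ1 : ψ 1 = AlgHom.id ℚ A)
    (hψmul : ∀ m n : ℕ+, ψ (m * n) = (ψ m).comp (ψ n))
    (hψcont : ∀ n : ℕ+, Continuous (ψ n))
    (expA logA : A → A)
    (I : Ideal A) (hI : IsClosed (I : Set A))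
    (hlogexp : ∀ a ∈ I, logA (expA a) = a)
    (G : A) (hG : G ∈ I)
    (hSG : Summable fun m : ℕ+ => ((m : ℚ)⁻¹) • ψ m G)
    (hSGI : (∑' m : ℕ+, ((m : ℚ)⁻¹) • ψ m G) ∈ I)
    (hsum2 : Summable fun p : ℕ+ × ℕ+ =>
      ((((ArithmeticFunction.moebius p.1 : ℤ) : ℚ)) / ((p.1 : ℚ) * (p.2 : ℚ)))
        • ψ (p.1 * p.2) G) :
    (∑' n : ℕ+, (((ArithmeticFunction.moebius n : ℤ) : ℚ) / n)
        • ψ n (logA (expA (∑' m : ℕ+, ((m : ℚ)⁻¹) • ψ m G)))) = G :=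
  stmt_6_general ψ hψ1 hψmul hψcont expA logA I hlogexp G hSG hSGI hsum2
end

section
/- The degree-n part of the reproducing kernel of the (q,t)-Hall pairing, evaluated plethystically at Y = 1/(q-1)(1-t)-scaled alphabet: p_{(n)}[X/((q-1)(1-t))] = Σ_{λ⊢n} H̃_λ[X] · Π'_{(i,j)∈λ}(1 - q^{j-1}t^{i-1}) / a_λ, where Π' omits the cell (1,1). -/
/-!
STATEMENT 14. The degree-`n` reproducing kernel of the `(q,t)`-Hall pairing, paired against
`p_{(n)}` in the `Y` alphabet, gives
`p_{(n)}[X/((q-1)(1-t))] = ∑_{λ⊢n} H̃_λ[X] · Π'_λ / a_λ`,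
where `Π'_λ = ∏_{(i,j)∈λ, (i,j)≠(1,1)} (1 - q^{j-1}t^{i-1})`.

Model: `V` is the space of degree-`n` symmetric functions over the field `K` (containing
`q, t`); `p μ = p_μ[Y]` is the power-sum basis, `pScaled μ = p_μ[X/((q-1)(1-t))]`,
`H λ = H̃_λ`.  Hypotheses encode the inputs of the proof: the two-alphabet Cauchy kernel
identity `∑_μ z_μ⁻¹ p_μ[X/((q-1)(1-t))] ⊗ p_μ[Y] = ∑_λ a_λ⁻¹ H̃_λ[X] ⊗ H̃_λ[Y]` (duality of
`(H̃_λ)` and `(H̃_λ/a_λ)`), and the Hall pairing with `p_{(n)}` in `Y`, a linear functional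
`π` with `π(p_μ) = n·δ_{μ,(n)}` (orthogonality of power sums) and `π(H̃_λ) = Π'_λ`
(extraction via `H̃_λ[1-u] = ∏(1-uq^{j-1}t^{i-1})`, dividing by `1-u` and setting `u=1`).
-/

open TensorProduct

/-- Row lengths of the Young diagram of `λ`, sorted decreasingly. -/
def rowsOf {n : ℕ} (lam : Nat.Partition n) : List ℕ :=
  (lam.parts.sort (· ≤ ·)).reverse

/-- `Π'_λ = ∏_{(i,j)∈λ, (i,j)≠(1,1)} (1 - q^{j-1} t^{i-1})` (0-indexed cells). -/
def piPrime {K : Type*} [CommRing K] (q t : K) {n : ℕ} (lam : Nat.Partition n) : K :=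
  ∏ i ∈ Finset.range (rowsOf lam).length,
    ∏ j ∈ Finset.range ((rowsOf lam).getD i 0),
      if i = 0 ∧ j = 0 then 1 else 1 - q ^ j * t ^ i

/-- The arm length of the (0-indexed) cell `(i,j)` of `λ`. -/
def armLen {n : ℕ} (lam : Nat.Partition n) (i j : ℕ) : ℕ :=
  (rowsOf lam).getD i 0 - (j + 1)

/-- The leg length of the (0-indexed) cell `(i,j)` of `λ`. -/
def legLen {n : ℕ} (lam : Nat.Partition n) (i j : ℕ) : ℕ :=
  (((rowsOf lam).drop (i + 1)).filter fun r => decide (j < r)).length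

/-- `a_λ(q,t) = ∏_{x∈λ} (q^{a(x)+1} - t^{l(x)}) (q^{a(x)} - t^{l(x)+1})`. -/
def aNorm {K : Type*} [CommRing K] (q t : K) {n : ℕ} (lam : Nat.Partition n) : K :=
  ∏ i ∈ Finset.range (rowsOf lam).length,
    ∏ j ∈ Finset.range ((rowsOf lam).getD i 0),
      (q ^ (armLen lam i j + 1) - t ^ legLen lam i j) *
        (q ^ armLen lam i j - t ^ (legLen lam i j + 1))

/-- `z_λ = ∏_i i^{m_i} m_i!`. -/
def zPart {n : ℕ} (μ : Nat.Partition n) : ℕ :=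
  ∏ r ∈ μ.parts.toFinset, r ^ μ.parts.count r * (μ.parts.count r).factorial

/-!
Apply the contraction `x ⊗ y ↦ π(y) • x` (pairing with `p_{(n)}` in the `Y` alphabet) to both
sides of the kernel identity. Power-sum orthogonality kills every term on the left except
`μ = (n)`, whose coefficient `π(p_{(n)}) / z_{(n)} = n / n` is `1`; on the right each `H̃_λ[Y]`
contributes `Π'_λ`.
-/

theorem TensorProduct.sum_smul_eq_of_sum_smul_tmul_eq {R V W ι κ : Type*} [CommRing R]
    [AddCommGroup V] [Module R V] [AddCommGroup W] [Module R W] [Fintype ι] [Fintype κ]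
    (π : W →ₗ[R] R) {c : ι → R} {x : ι → V} {y : ι → W} {d : κ → R} {u : κ → V} {v : κ → W}
    (h : ∑ i, c i • (x i ⊗ₜ[R] y i) = ∑ k, d k • (u k ⊗ₜ[R] v k)) :
    ∑ i, (c i * π (y i)) • x i = ∑ k, (d k * π (v k)) • u k := by
  have := congrArg ((TensorProduct.rid R V).toLinearMap ∘ₗ LinearMap.lTensor V π) h
  simpa only [map_sum, map_smul, LinearMap.comp_apply, LinearMap.lTensor_tmul,
    LinearEquiv.coe_coe, TensorProduct.rid_tmul, smul_smul] using this

theorem zPart_indiscrete {n : ℕ} (hn : n ≠ 0) : zPart (Nat.Partition.indiscrete n) = n := by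
  simp [zPart, Nat.Partition.indiscrete_parts hn]

theorem stmt_14 {K V : Type*} [Field K] [CharZero K] [AddCommGroup V] [Module K V]
    (q t : K) (n : ℕ) (hn : 0 < n)
    (p pScaled H : Nat.Partition n → V)
    (π : V →ₗ[K] K)
    (hπp : ∀ μ : Nat.Partition n,
      π (p μ) = if μ = Nat.Partition.indiscrete n then (n : K) else 0)
    (hπH : ∀ lam : Nat.Partition n, π (H lam) = piPrime q t lam)
    (hker : (∑ μ : Nat.Partition n, ((zPart μ : K))⁻¹ • (pScaled μ ⊗ₜ[K] p μ))
        = ∑ lam : Nat.Partition n, (aNorm q t lam)⁻¹ • (H lam ⊗ₜ[K] H lam)) :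
    pScaled (Nat.Partition.indiscrete n)
      = ∑ lam : Nat.Partition n, (piPrime q t lam / aNorm q t lam) • H lam := by
  have hn' : (n : K) ≠ 0 := Nat.cast_ne_zero.mpr hn.ne'
  have h := TensorProduct.sum_smul_eq_of_sum_smul_tmul_eq π hker
  simp only [hπp, hπH, mul_ite, mul_zero, ite_smul, zero_smul,
    Finset.sum_ite_eq', Finset.mem_univ, if_true] at h
  rw [zPart_indiscrete hn.ne', inv_mul_cancel₀ hn', one_smul] at h
  simpa only [div_eq_inv_mul] using h
end
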